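/- arXiv:1104.3812 — 2 statements merged into one kernel-verified Lean document; each statement's English description precedes it below -/
import Mathlib

section
/- Let A be a Banach algebra and let φ ∈ A*. Then the map A → A*, a ↦ a·φ is compact if and only if the map A → A*, a ↦ φ·a is compact. -/
/-!
Under the canonical embedding `ι : A → A**`, the map `a ↦ φ·a` is the adjoint of `a ↦ a·φ`
composed with `ι`, and symmetrically, so the theorem follows from Schauder's theorem that the
adjoint of a compact operator is compact. For the latter, `T` maps the unit ball into a compact
set `K`; restricting functionals to `K` sends the dual unit ball to a bounded, equicontinuous
family in `C(K)`, which is totally bounded by Arzelà–Ascoli, and `‖T* ψ‖ ≤ sup_K ‖ψ‖`.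
-/

open NormedSpace

noncomputable section

/-- A bounded operator is weakly compact if the image of the closed unit ball has
compact closure in the weak topology of the codomain. -/
def IsWeaklyCompactOperator {X Y : Type*} [NormedAddCommGroup X] [NormedSpace ℝ X]
    [NormedAddCommGroup Y] [NormedSpace ℝ Y] (T : X →L[ℝ] Y) : Prop :=
  IsCompact (closure (toWeakSpace ℝ Y '' (T '' Metric.closedBall 0 1)))

/-- A normed space is reflexive if the canonical embedding into the bidual is surjective. -/
def IsReflexiveSpace (E : Type*) [NormedAddCommGroup E] [NormedSpace ℝ E] : Prop :=
  Function.Surjective (inclusionInDoubleDual ℝ E)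

/-- The orbit map `a ↦ a·φ`, where `⟨a·φ, b⟩ = ⟨φ, b * a⟩`. -/
def leftOrbit {A : Type*} [NormedRing A] [NormedAlgebra ℝ A] (φ : StrongDual ℝ A) :
    A →L[ℝ] StrongDual ℝ A :=
  (ContinuousLinearMap.compL ℝ A A ℝ φ).comp (ContinuousLinearMap.mul ℝ A).flip

/-- The orbit map `a ↦ φ·a`, where `⟨φ·a, b⟩ = ⟨φ, a * b⟩`. -/
def rightOrbit {A : Type*} [NormedRing A] [NormedAlgebra ℝ A] (φ : StrongDual ℝ A) :
    A →L[ℝ] StrongDual ℝ A :=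
  (ContinuousLinearMap.compL ℝ A A ℝ φ).comp (ContinuousLinearMap.mul ℝ A)

section Schauder

open Metric Set BoundedContinuousFunction

theorem TotallyBounded.image_of_dist_le {α β γ : Type*} [PseudoMetricSpace β]
    [PseudoMetricSpace γ] {s : Set α} {f : α → β} {g : α → γ} (hg : TotallyBounded (g '' s))
    (hfg : ∀ a ∈ s, ∀ b ∈ s, dist (f a) (f b) ≤ dist (g a) (g b)) :
    TotallyBounded (f '' s) := by
  rw [Metric.totallyBounded_iff]
  intro ε hε
  obtain ⟨t, hts, htfin, htcov⟩ := finite_approx_of_totallyBounded hg ε hε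
  choose a has hga using hts
  have := htfin.to_subtype
  refine ⟨range fun c : t => f (a c.2), finite_range _, ?_⟩
  rintro _ ⟨x, hx, rfl⟩
  obtain ⟨c, hc, hxc⟩ := mem_iUnion₂.1 (htcov ⟨x, hx, rfl⟩)
  refine mem_iUnion₂.2 ⟨_, ⟨⟨c, hc⟩, rfl⟩, ?_⟩
  calc dist (f x) (f (a hc)) ≤ dist (g x) (g (a hc)) := hfg x hx _ (has hc)
    _ = dist (g x) c := by rw [hga]
    _ < ε := hxc

variable {𝕜 X Y : Type*} [RCLike 𝕜] [NormedAddCommGroup X] [NormedSpace 𝕜 X]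
  [NormedAddCommGroup Y] [NormedSpace 𝕜 Y]

def ContinuousLinearMap.dualMap (T : X →L[𝕜] Y) : StrongDual 𝕜 Y →L[𝕜] StrongDual 𝕜 X :=
  (ContinuousLinearMap.compL 𝕜 X Y 𝕜).flip T

theorem isCompact_closure_restrict_closedBall_strongDual (K : Set Y) [CompactSpace K] :
    IsCompact (closure ((fun ψ : StrongDual 𝕜 Y => mkOfCompact ((ψ : C(Y, 𝕜)).restrict K)) ''
      closedBall 0 1)) := by
  obtain ⟨R, hR⟩ := (isCompact_iff_compactSpace.2 ‹CompactSpace K›).isBounded.subset_closedBall 0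
  refine arzela_ascoli (closedBall 0 R) (isCompact_closedBall 0 R) _ ?_ ?_
  · rintro _ x ⟨ψ, hψ, rfl⟩
    have hx : ‖(x : Y)‖ ≤ R := mem_closedBall_zero_iff.1 (hR x.2)
    rw [mem_closedBall_zero_iff] at hψ ⊢
    calc ‖ψ x‖ ≤ ‖ψ‖ * ‖(x : Y)‖ := ψ.le_opNorm x
      _ ≤ 1 * R := mul_le_mul hψ hx (norm_nonneg _) zero_le_one
      _ = R := one_mul R
  · refine (LipschitzWith.uniformEquicontinuous _ 1 ?_).equicontinuous
    rintro ⟨_, ψ, hψ, rfl⟩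
    exact (ψ.lipschitz.comp (LipschitzWith.subtype_val K)).weaken
      (by simpa [← NNReal.coe_le_coe] using hψ)

theorem ContinuousLinearMap.norm_dualMap_apply_le (T : X →L[𝕜] Y) (ψ : StrongDual 𝕜 Y)
    {K : Set Y} [CompactSpace K] (hTK : T '' closedBall 0 1 ⊆ K) :
    ‖T.dualMap ψ‖ ≤ ‖mkOfCompact ((ψ : C(Y, 𝕜)).restrict K)‖ :=
  opNorm_le_of_unit_norm (norm_nonneg _) fun x hx =>
    norm_coe_le_norm (mkOfCompact ((ψ : C(Y, 𝕜)).restrict K))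
      ⟨T x, hTK ⟨x, mem_closedBall_zero_iff.2 hx.le, rfl⟩⟩

theorem IsCompactOperator.dualMap {T : X →L[𝕜] Y} (hT : IsCompactOperator T) :
    IsCompactOperator T.dualMap := by
  obtain ⟨K, hK, hTK⟩ := hT.image_closedBall_subset_compact (f := (T : X →ₗ[𝕜] Y)) 1
  have := isCompact_iff_compactSpace.1 hK
  let restrict (ψ : StrongDual 𝕜 Y) : K →ᵇ 𝕜 := mkOfCompact ((ψ : C(Y, 𝕜)).restrict K)
  have hdist (ψ₁ ψ₂ : StrongDual 𝕜 Y) :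
      dist (T.dualMap ψ₁) (T.dualMap ψ₂) ≤ dist (restrict ψ₁) (restrict ψ₂) := by
    have hsub : restrict (ψ₁ - ψ₂) = restrict ψ₁ - restrict ψ₂ := rfl
    rw [dist_eq_norm, dist_eq_norm, ← map_sub, ← hsub]
    exact T.norm_dualMap_apply_le (ψ₁ - ψ₂) hTK
  have htb : TotallyBounded (T.dualMap '' closedBall 0 1) :=
    (isCompact_closure_restrict_closedBall_strongDual K).totallyBounded.subset subset_closure
      |>.image_of_dist_le fun ψ₁ _ ψ₂ _ => hdist ψ₁ ψ₂
  rw [← ContinuousLinearMap.coe_coe,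
    isCompactOperator_iff_image_closedBall_subset_compact _ one_pos]
  exact ⟨_, htb.closure.isCompact_of_isClosed isClosed_closure, subset_closure⟩

end Schauder

theorem leftOrbit_eq_dualMap_rightOrbit_comp {A : Type*} [NormedRing A] [NormedAlgebra ℝ A]
    (φ : StrongDual ℝ A) :
    leftOrbit φ = (rightOrbit φ).dualMap.comp (inclusionInDoubleDual ℝ A) := by
  ext a b
  rfl

theorem rightOrbit_eq_dualMap_leftOrbit_comp {A : Type*} [NormedRing A] [NormedAlgebra ℝ A]
    (φ : StrongDual ℝ A) :
    rightOrbit φ = (leftOrbit φ).dualMap.comp (inclusionInDoubleDual ℝ A) := by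
  ext a b
  rfl

theorem leftOrbit_compact_iff_rightOrbit_general (A : Type*) [NormedRing A]
    [NormedAlgebra ℝ A] (φ : StrongDual ℝ A) :
    IsCompactOperator (leftOrbit φ) ↔ IsCompactOperator (rightOrbit φ) := by
  constructor <;> intro h
  · rw [rightOrbit_eq_dualMap_leftOrbit_comp]
    exact h.dualMap.comp_clm _
  · rw [leftOrbit_eq_dualMap_rightOrbit_comp]
    exact h.dualMap.comp_clm _

/-- For a Banach algebra `A` and `φ ∈ A*`, the map `a ↦ a·φ` is compact
iff the map `a ↦ φ·a` is compact. -/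
theorem leftOrbit_compact_iff_rightOrbit (A : Type*) [NormedRing A]
    [NormedAlgebra ℝ A] [CompleteSpace A] (φ : StrongDual ℝ A) :
    IsCompactOperator (leftOrbit φ) ↔ IsCompactOperator (rightOrbit φ) :=
  leftOrbit_compact_iff_rightOrbit_general A φ
end
end

section
/- Let H and K be Hilbert spaces, and suppose the space K(K,H) of compact operators from K to H is reflexive as a Banach space. Then H or K is finite dimensional. -/
/-!
If both spaces are infinite dimensional, pick orthonormal sequences `(eₙ)` in `K` and `(fₙ)` in
`H`. The functional `φ T = ∑ 2⁻ⁿ⁻¹ ⟪fₙ, T eₙ⟫` on `K(K, H)` has norm `1`, approached by the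
finite-rank partial sums `∑_{n<N} ⟪eₙ, ·⟫ fₙ`. On a reflexive space `φ` attains its norm, and a
`T` in the unit ball with `φ T = 1` must satisfy `⟪fₙ, T eₙ⟫ = 1` for every `n`. A compact `T`
cannot do this: it maps `(eₙ)` into a compact set, on which `⟪fₙ, ·⟫ → 0` uniformly.
-/

open NormedSpace

noncomputable section

open Filter Topology InnerProductSpace

theorem IsReflexiveSpace.exists_norm_le_one_apply_eq_norm {E : Type*} [NormedAddCommGroup E]
    [NormedSpace ℝ E] (hE : IsReflexiveSpace E) (φ : StrongDual ℝ E) :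
    ∃ x : E, ‖x‖ ≤ 1 ∧ φ x = ‖φ‖ := by
  rcases eq_or_ne φ 0 with rfl | hφ
  · exact ⟨0, by simp, by simp⟩
  obtain ⟨Φ, hΦ, hΦφ⟩ := exists_dual_vector ℝ φ (norm_ne_zero_iff.mpr hφ)
  obtain ⟨x, rfl⟩ := hE Φ
  refine ⟨x, ?_, hΦφ⟩
  rw [← hΦ, ← (inclusionInDoubleDualLi ℝ).norm_map x]
  rfl

section WeightedSum

variable {E : Type*} [SeminormedAddCommGroup E] [NormedSpace ℝ E]
  {w : ℕ → ℝ} {ψ : ℕ → StrongDual ℝ E}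

theorem hasSum_apply_tsum_smul (hw : Summable w) (hψ : ∀ n, ‖ψ n‖ ≤ 1) (x : E) :
    HasSum (fun n => w n * ψ n x) ((∑' n, w n • ψ n) x) := by
  have hsum : Summable fun n => w n • ψ n :=
    .of_norm_bounded hw.norm fun n => by
      rw [norm_smul]
      exact mul_le_of_le_one_right (norm_nonneg _) (hψ n)
  exact hsum.hasSum.mapL (ContinuousLinearMap.apply ℝ ℝ x)

theorem one_le_norm_tsum_smul (hw : HasSum w 1) (hw₀ : ∀ n, 0 ≤ w n) (hψ : ∀ n, ‖ψ n‖ ≤ 1)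
    (hS : ∀ N, ∃ S : E, ‖S‖ ≤ 1 ∧ (∀ m, 0 ≤ ψ m S) ∧ ∀ m < N, ψ m S = 1) :
    1 ≤ ‖∑' n, w n • ψ n‖ := by
  refine le_of_tendsto' hw.tendsto_sum_nat fun N => ?_
  obtain ⟨S, hS_norm, hS_nonneg, hS_one⟩ := hS N
  calc ∑ m ∈ Finset.range N, w m
      = ∑ m ∈ Finset.range N, w m * ψ m S :=
        Finset.sum_congr rfl fun m hm => by rw [hS_one m (Finset.mem_range.mp hm), mul_one]
    _ ≤ (∑' n, w n • ψ n) S :=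
        sum_le_hasSum _ (fun m _ => mul_nonneg (hw₀ m) (hS_nonneg m))
          (hasSum_apply_tsum_smul hw.summable hψ S)
    _ ≤ ‖∑' n, w n • ψ n‖ :=
        (le_abs_self _).trans (((∑' n, w n • ψ n).le_opNorm_of_le hS_norm).trans_eq (mul_one _))

theorem apply_eq_one_of_one_le_tsum_smul_apply (hw : HasSum w 1) (hw₀ : ∀ n, 0 < w n)
    (hψ : ∀ n, ‖ψ n‖ ≤ 1) {x : E} (hx : ‖x‖ ≤ 1) (h : 1 ≤ (∑' n, w n • ψ n) x) (n : ℕ) :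
    ψ n x = 1 := by
  have hle : ∀ m, ψ m x ≤ 1 := fun m =>
    (le_abs_self _).trans (((ψ m).le_of_opNorm_le_of_le (hψ m) hx).trans_eq (mul_one 1))
  by_contra hne
  have := hasSum_lt (i := n) (fun m => mul_le_of_le_one_right (hw₀ m).le (hle m))
    (mul_lt_of_lt_one_right (hw₀ n) ((hle n).lt_of_ne hne))
    (hasSum_apply_tsum_smul hw.summable hψ x) hw
  linarith

end WeightedSum

theorem IsReflexiveSpace.exists_forall_apply_eq_one {E : Type*} [NormedAddCommGroup E]
    [NormedSpace ℝ E] (hE : IsReflexiveSpace E) {ψ : ℕ → StrongDual ℝ E} (hψ : ∀ n, ‖ψ n‖ ≤ 1)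
    (hS : ∀ N, ∃ S : E, ‖S‖ ≤ 1 ∧ (∀ m, 0 ≤ ψ m S) ∧ ∀ m < N, ψ m S = 1) :
    ∃ x : E, ‖x‖ ≤ 1 ∧ ∀ n, ψ n x = 1 := by
  have hw := hasSum_geometric_two' 1
  have hw₀ : ∀ n : ℕ, (0 : ℝ) < 1 / 2 / 2 ^ n := fun n => by positivity
  obtain ⟨x, hx, hφx⟩ := hE.exists_norm_le_one_apply_eq_norm (∑' n, (1 / 2 / 2 ^ n : ℝ) • ψ n)
  refine ⟨x, hx, apply_eq_one_of_one_le_tsum_smul_apply hw hw₀ hψ hx ?_⟩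
  exact hφx ▸ one_le_norm_tsum_smul hw (fun n => (hw₀ n).le) hψ hS

theorem exists_orthonormal_nat_of_not_finiteDimensional {𝕜 E : Type*} [RCLike 𝕜]
    [NormedAddCommGroup E] [InnerProductSpace 𝕜 E] (h : ¬FiniteDimensional 𝕜 E) :
    ∃ v : ℕ → E, Orthonormal 𝕜 v := by
  let b := Module.Basis.ofVectorSpace 𝕜 E
  have : Infinite (Module.Basis.ofVectorSpaceIndex 𝕜 E) :=
    not_finite_iff_infinite.mp fun _ => h (Module.Finite.of_basis b)
  exact ⟨_, InnerProductSpace.gramSchmidtNormed_orthonormal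
    (b.linearIndependent.comp _ (Infinite.natEmbedding _).injective)⟩

section Hilbert

variable {ι H K : Type*} [NormedAddCommGroup H] [InnerProductSpace ℝ H]
  [NormedAddCommGroup K] [InnerProductSpace ℝ K]

theorem Orthonormal.tendsto_inner_right {f : ι → H} (hf : Orthonormal ℝ f) (y : H) :
    Tendsto (fun n => ⟪f n, y⟫_ℝ) cofinite (𝓝 0) := by
  have h := (Real.continuous_sqrt.tendsto 0).comp
    (hf.inner_products_summable y).tendsto_cofinite_zero
  simp only [Function.comp_def, Real.sqrt_sq (norm_nonneg _), Real.sqrt_zero] at h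
  exact tendsto_zero_iff_norm_tendsto_zero.mpr h

theorem Orthonormal.tendsto_inner_of_isCompact {f : ℕ → H} (hf : Orthonormal ℝ f) {s : Set H}
    (hs : IsCompact s) {u : ℕ → H} (hu : ∀ n, u n ∈ s) :
    Tendsto (fun n => ⟪f n, u n⟫_ℝ) atTop (𝓝 0) := by
  refine tendsto_of_subseq_tendsto fun ns hns => ?_
  obtain ⟨y, -, φ, hφ, hy⟩ := hs.tendsto_subseq fun n => hu (ns n)
  set v := fun k => ns (φ k)
  have hv : Tendsto v atTop cofinite :=
    Nat.cofinite_eq_atTop ▸ hns.comp hφ.tendsto_atTop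
  have h₁ : Tendsto (fun k => ⟪f (v k), y⟫_ℝ) atTop (𝓝 0) :=
    (hf.tendsto_inner_right y).comp hv
  have h₂ : Tendsto (fun k => ⟪f (v k), u (v k) - y⟫_ℝ) atTop (𝓝 0) :=
    squeeze_zero_norm (fun k => (norm_inner_le_norm _ _).trans_eq (by rw [hf.1, one_mul]; rfl))
      (tendsto_iff_norm_sub_tendsto_zero.mp hy)
  exact ⟨φ, by simpa [inner_sub_right] using h₁.add h₂⟩

theorem IsCompactOperator.tendsto_inner_apply {T : K →L[ℝ] H} (hT : IsCompactOperator T)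
    {x : ℕ → K} (hx : ∀ n, ‖x n‖ ≤ 1) {f : ℕ → H} (hf : Orthonormal ℝ f) :
    Tendsto (fun n => ⟪f n, T (x n)⟫_ℝ) atTop (𝓝 0) :=
  hf.tendsto_inner_of_isCompact (hT.isCompact_closure_image_closedBall 1)
    fun n => subset_closure ⟨x n, by simpa using hx n, rfl⟩

theorem isCompactOperator_rankOne (x : H) (y : K) : IsCompactOperator (rankOne ℝ x y) := by
  rw [rankOne_def']
  exact (isCompactOperator_of_locallyCompactSpace_dom (innerSL ℝ y)).clm_comp
    (ContinuousLinearMap.toSpanSingleton ℝ x)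

theorem Orthonormal.norm_sum_rankOne_le {e : ι → K} {f : ι → H} (he : Orthonormal ℝ e)
    (hf : Orthonormal ℝ f) (s : Finset ι) : ‖∑ i ∈ s, rankOne ℝ (f i) (e i)‖ ≤ 1 := by
  refine ContinuousLinearMap.opNorm_le_bound _ zero_le_one fun k => ?_
  have hsq : ‖∑ i ∈ s, ⟪e i, k⟫_ℝ • f i‖ ^ 2 = ∑ i ∈ s, ‖⟪e i, k⟫_ℝ‖ ^ 2 := by
    rw [← real_inner_self_eq_norm_sq, hf.inner_sum]
    simp [sq]
  rw [one_mul, ← pow_le_pow_iff_left₀ (norm_nonneg _) (norm_nonneg _) two_ne_zero]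
  simpa [hsq] using he.sum_inner_products_le k

theorem Orthonormal.inner_sum_rankOne_apply [DecidableEq ι] {e : ι → K} {f : ι → H}
    (he : Orthonormal ℝ e) (hf : Orthonormal ℝ f) (s : Finset ι) (m : ι) :
    ⟪f m, (∑ i ∈ s, rankOne ℝ (f i) (e i)) (e m)⟫_ℝ = if m ∈ s then 1 else 0 := by
  simp only [sum_apply, rankOne_apply, orthonormal_iff_ite.mp he, ite_smul,
    one_smul, zero_smul, Finset.sum_ite_eq', apply_ite, inner_zero_right]
  simp [hf.1 m]

end Hilbert

theorem IsReflexiveSpace.exists_compactOperator_inner_apply_eq_one {H K : Type*}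
    [NormedAddCommGroup H] [InnerProductSpace ℝ H] [NormedAddCommGroup K] [InnerProductSpace ℝ K]
    (hrefl : IsReflexiveSpace (compactOperator (RingHom.id ℝ) K H)) {e : ℕ → K} {f : ℕ → H}
    (he : Orthonormal ℝ e) (hf : Orthonormal ℝ f) :
    ∃ T ∈ compactOperator (RingHom.id ℝ) K H, ∀ n, ⟪f n, T (e n)⟫_ℝ = 1 := by
  -- The functionals `T ↦ ⟪fₙ, T eₙ⟫` are handed to the lemma instead of being `let`-bound:
  -- instance search does not find the norm on the dual of this submodule by itself.
  have key := hrefl.exists_forall_apply_eq_one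
    (ψ := fun n => innerSL ℝ (f n) ∘L .apply ℝ H (e n) ∘L Submodule.subtypeL _)
  have hsum (N m : ℕ) : ⟪f m, (∑ n ∈ Finset.range N, rankOne ℝ (f n) (e n)) (e m)⟫_ℝ =
      if m ∈ Finset.range N then 1 else 0 :=
    he.inner_sum_rankOne_apply hf _ m
  obtain ⟨T, -, hT⟩ := key
    (fun n => ContinuousLinearMap.opNorm_le_bound _ zero_le_one fun T => by
      simpa [hf.1 n, he.1 n] using
        (norm_inner_le_norm (𝕜 := ℝ) (f n) ((T : K →L[ℝ] H) (e n))).trans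
          (mul_le_mul_of_nonneg_left ((T : K →L[ℝ] H).le_opNorm (e n)) (norm_nonneg _)))
    fun N => ⟨⟨_, sum_mem fun n _ => isCompactOperator_rankOne (f n) (e n)⟩,
      he.norm_sum_rankOne_le hf (Finset.range N),
      fun m => (hsum N m).trans_ge (by split_ifs <;> norm_num),
      fun m hm => (hsum N m).trans (if_pos (Finset.mem_range.mpr hm))⟩
  exact ⟨T, T.2, hT⟩

theorem finiteDimensional_of_compactOperators_reflexive_general
    {H K : Type*}
    [NormedAddCommGroup H] [InnerProductSpace ℝ H]
    [NormedAddCommGroup K] [InnerProductSpace ℝ K]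
    (hrefl : IsReflexiveSpace (compactOperator (RingHom.id ℝ) K H)) :
    FiniteDimensional ℝ H ∨ FiniteDimensional ℝ K := by
  by_contra! h
  obtain ⟨f, hf⟩ := exists_orthonormal_nat_of_not_finiteDimensional h.1
  obtain ⟨e, he⟩ := exists_orthonormal_nat_of_not_finiteDimensional h.2
  obtain ⟨T, hT, hTef⟩ := hrefl.exists_compactOperator_inner_apply_eq_one he hf
  simpa [hTef] using hT.tendsto_inner_apply (fun n => (he.1 n).le) hf

/-- If the space `K(K, H)` of compact operators between Hilbert spaces
`K` and `H` is reflexive as a Banach space, then `H` or `K` is finite dimensional. -/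
theorem finiteDimensional_of_compactOperators_reflexive
    {H K : Type*}
    [NormedAddCommGroup H] [InnerProductSpace ℝ H] [CompleteSpace H]
    [NormedAddCommGroup K] [InnerProductSpace ℝ K] [CompleteSpace K]
    (hrefl : IsReflexiveSpace (compactOperator (RingHom.id ℝ) K H)) :
    FiniteDimensional ℝ H ∨ FiniteDimensional ℝ K :=
  finiteDimensional_of_compactOperators_reflexive_general hrefl
end
end
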